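/- Let E = {|ψ_j⟩} be a uniform state t-design in a q-dimensional Hilbert space, and let P be an orthogonal projector onto a d-dimensional subspace V with d ≤ q. Define normalized projected states |ψ̃_j⟩ = P|ψ_j⟩/‖P|ψ_j⟩‖ (omitting j with P|ψ_j⟩ = 0) and weights w̃_j = ‖P|ψ_j⟩‖^{2t} / Σ_k ‖P|ψ_k⟩‖^{2t}. Then the weighted ensemble {(w̃_j, |ψ̃_j⟩)} is a weighted state t-design for V: Σ_j w̃_j (|ψ̃_j⟩⟨ψ̃_j|)^{⊗t} equals the normalized projector onto the symmetric subspace of V^{⊗t}. -/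

import Mathlib

open Matrix

/-- Projector onto the symmetric subspace of `(ℂ^q)^{⊗ t}`. -/
noncomputable def symProj (q t : ℕ) :
    Matrix (Fin t → Fin q) (Fin t → Fin q) ℂ :=
  Matrix.of fun x y =>
    (t.factorial : ℂ)⁻¹ * ∑ π : Equiv.Perm (Fin t), if x ∘ ⇑π = y then 1 else 0

/-- `t`-fold tensor power of a matrix. -/
noncomputable def tpow (t : ℕ) {q : ℕ} (P : Matrix (Fin q) (Fin q) ℂ) :
    Matrix (Fin t → Fin q) (Fin t → Fin q) ℂ :=
  Matrix.of fun x y => ∏ i, P (x i) (y i)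

/-- Norm of the projected vector `P ψ`. -/
noncomputable def pnorm {q : ℕ} (P : Matrix (Fin q) (Fin q) ℂ) (v : Fin q → ℂ) : ℝ :=
  Real.sqrt (∑ i, ‖P.mulVec v i‖ ^ 2)

/-- Normalized projected state `P ψ / ‖P ψ‖` (the zero vector when `Pψ = 0`). -/
noncomputable def ptil {q : ℕ} (P : Matrix (Fin q) (Fin q) ℂ) (v : Fin q → ℂ) :
    Fin q → ℂ :=
  fun i => P.mulVec v i / (pnorm P v : ℂ)

/-!
Write `Π` for `symProj q t` and `A^{⊗t}` for `tpow t A`. Since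
`((Pψ)(Pψ)†)^{⊗t} = P^{⊗t} (ψψ†)^{⊗t} P^{⊗t}`, the design property gives
`∑ⱼ ((Pψⱼ)(Pψⱼ)†)^{⊗t} = (N / C(q+t-1,t)) P^{⊗t} Π P^{⊗t}`, and `‖Pψⱼ‖^{2t}` is the trace of the
`j`-th summand. Hence the reweighted ensemble is `P^{⊗t} Π P^{⊗t} = Π P^{⊗t}` divided by its trace,
and that trace is `C(d+t-1,t)`: diagonalising `P = U D U†` with `D` the indicator of a `d`-set `S`,
`Tr(Π D^{⊗t}) = (1/t!) ∑_{x ∈ S^t} |Stab(x)|`, which by Burnside's lemma is the number of size-`t`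
multisets on `S`.
-/

open Finset

section TensorPower

variable {q : ℕ} (t : ℕ)

lemma tpow_mul (A B : Matrix (Fin q) (Fin q) ℂ) : tpow t (A * B) = tpow t A * tpow t B := by
  ext x y
  simp only [tpow, mul_apply, of_apply, Fintype.prod_sum, prod_mul_distrib]

lemma tpow_smul (r : ℂ) (A : Matrix (Fin q) (Fin q) ℂ) : tpow t (r • A) = r ^ t • tpow t A := by
  ext x y
  simp [tpow, prod_mul_distrib]

lemma tpow_diagonal_apply (f : Fin q → ℂ) (x y : Fin t → Fin q) :
    tpow t (diagonal f) x y = if x = y then ∏ i, f (x i) else 0 := by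
  split_ifs with h
  · simp [tpow, h]
  · obtain ⟨i, hi⟩ := Function.ne_iff.mp h
    exact prod_eq_zero (mem_univ i) (diagonal_apply_ne f hi)

lemma tpow_one : tpow t (1 : Matrix (Fin q) (Fin q) ℂ) = 1 := by
  ext x y
  rw [← diagonal_one, tpow_diagonal_apply, one_apply]
  simp

lemma trace_tpow (A : Matrix (Fin q) (Fin q) ℂ) : trace (tpow t A) = trace A ^ t := by
  simp only [trace, Matrix.diag, tpow, of_apply]
  rw [← Fintype.prod_sum (fun (_ : Fin t) a => A a a), prod_const, card_univ, Fintype.card_fin]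

lemma tpow_vecMulVec_apply (u v : Fin q → ℂ) (x y : Fin t → Fin q) :
    tpow t (vecMulVec u v) x y = ∏ i, u (x i) * v (y i) := by
  simp [tpow, vecMulVec_apply]

lemma tpow_apply_comp_perm (A : Matrix (Fin q) (Fin q) ℂ) (π : Equiv.Perm (Fin t))
    (x y : Fin t → Fin q) : tpow t A (x ∘ π) y = tpow t A x (y ∘ π.symm) := by
  simp only [tpow, of_apply, Function.comp_apply]
  exact (Equiv.prod_comp π.symm _).symm.trans (by simp)

lemma symProj_mul_apply (M : Matrix (Fin t → Fin q) (Fin t → Fin q) ℂ) (x y : Fin t → Fin q) :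
    (symProj q t * M) x y = (t.factorial : ℂ)⁻¹ * ∑ π : Equiv.Perm (Fin t), M (x ∘ π) y := by
  simp only [mul_apply, symProj, of_apply, mul_assoc, sum_mul, ← mul_sum, ite_mul, one_mul,
    zero_mul]
  rw [sum_comm]
  simp

lemma mul_symProj_apply (M : Matrix (Fin t → Fin q) (Fin t → Fin q) ℂ) (x y : Fin t → Fin q) :
    (M * symProj q t) x y
      = (t.factorial : ℂ)⁻¹ * ∑ π : Equiv.Perm (Fin t), M x (y ∘ π.symm) := by
  simp only [mul_apply, symProj, of_apply, mul_sum, mul_ite, mul_one, mul_zero]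
  rw [sum_comm]
  simp_rw [← Equiv.eq_comp_symm]
  simp [mul_comm]

lemma symProj_mul_tpow_comm (A : Matrix (Fin q) (Fin q) ℂ) :
    symProj q t * tpow t A = tpow t A * symProj q t := by
  ext x y
  simp only [symProj_mul_apply, mul_symProj_apply, tpow_apply_comp_perm]

end TensorPower

section SymmetricTuples

open MulAction

attribute [local instance] arrowAction

variable {α : Type*} {t : ℕ}

def symOfFn (x : Fin t → α) : Sym α t := ⟨List.ofFn x, by simp⟩

lemma symOfFn_comp_perm (x : Fin t → α) (σ : Equiv.Perm (Fin t)) :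
    symOfFn (x ∘ σ) = symOfFn x :=
  Subtype.ext (Multiset.coe_eq_coe.mpr (σ.ofFn_comp_perm x))

lemma symOfFn_surjective : Function.Surjective (symOfFn : (Fin t → α) → Sym α t) := by
  rintro ⟨m, hm⟩
  induction m using Quotient.inductionOn with
  | h l =>
    subst hm
    exact ⟨fun i => l[i], Subtype.ext (congrArg ((↑) : List α → Multiset α) List.ofFn_getElem)⟩

lemma exists_perm_of_symOfFn_eq [LinearOrder α] {x y : Fin t → α}
    (h : symOfFn x = symOfFn y) : ∃ σ : Equiv.Perm (Fin t), y ∘ σ = x := by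
  have hperm : (List.ofFn x).Perm (List.ofFn y) := Multiset.coe_eq_coe.mp (congrArg Subtype.val h)
  -- both tuples sort to the same monotone tuple
  have hsorted : x ∘ Tuple.sort x = y ∘ Tuple.sort y := List.ofFn_injective <|
    List.Perm.eq_of_sortedLE (Tuple.monotone_sort x).sortedLE_ofFn
      (Tuple.monotone_sort y).sortedLE_ofFn
      (((Tuple.sort x).ofFn_comp_perm x).trans (hperm.trans ((Tuple.sort y).ofFn_comp_perm y).symm))
  refine ⟨(Tuple.sort x).symm.trans (Tuple.sort y), funext fun i => ?_⟩
  simpa using (congrFun hsorted ((Tuple.sort x).symm i)).symm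

lemma orbitRel_perm_iff [LinearOrder α] (x y : Fin t → α) :
    orbitRel (Equiv.Perm (Fin t)) (Fin t → α) x y ↔ symOfFn x = symOfFn y := by
  rw [orbitRel_apply]
  constructor
  · rintro ⟨σ, rfl⟩
    exact symOfFn_comp_perm y _
  · intro h
    obtain ⟨σ, rfl⟩ := exists_perm_of_symOfFn_eq h.symm
    exact ⟨σ, funext fun a => congrArg x (σ.apply_symm_apply a)⟩

lemma sum_card_perm_fixing [Fintype α] [LinearOrder α] :
    ∑ x : Fin t → α, #{π : Equiv.Perm (Fin t) | x ∘ π = x}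
      = (Fintype.card α + t - 1).choose t * t.factorial := by
  classical
  have hfix (π : Equiv.Perm (Fin t)) :
      #{x : Fin t → α | x ∘ π = x} = Fintype.card (fixedBy (Fin t → α) π⁻¹) := by
    rw [← Fintype.card_subtype]
    rfl
  have horbits : Fintype.card (orbitRel.Quotient (Equiv.Perm (Fin t)) (Fin t → α))
      = Fintype.card (Sym α t) :=
    Fintype.card_congr ((Quotient.congrRight orbitRel_perm_iff).trans
      (Setoid.quotientKerEquivOfSurjective _ symOfFn_surjective))
  calc ∑ x : Fin t → α, #{π : Equiv.Perm (Fin t) | x ∘ π = x}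
      = ∑ π : Equiv.Perm (Fin t), #{x : Fin t → α | x ∘ π = x} := by
        simp only [card_filter]
        exact sum_comm
    _ = ∑ π : Equiv.Perm (Fin t), Fintype.card (fixedBy (Fin t → α) π) := by
        simp only [hfix]
        exact Fintype.sum_equiv (Equiv.inv _) _ _ fun _ => rfl
    _ = _ := by
        rw [sum_card_fixedBy_eq_card_orbits_mul_card_group, horbits, Sym.card_sym_eq_choose,
          Fintype.card_perm, Fintype.card_fin]

end SymmetricTuples

section SymmetrizedTrace

variable {q : ℕ} (t : ℕ)

lemma sum_card_perm_fixing_of_forall_mem {β : Type*} [Fintype β] [LinearOrder β]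
    (S : Finset β) :
    ∑ x : Fin t → β with ∀ i, x i ∈ S, #{π : Equiv.Perm (Fin t) | x ∘ π = x}
      = (#S + t - 1).choose t * t.factorial := by
  rw [← Fintype.card_coe S, ← sum_card_perm_fixing,
    sum_subtype _ (p := fun x : Fin t → β => ∀ i, x i ∈ S) (by simp)]
  refine Fintype.sum_equiv Equiv.subtypePiEquivPi _ _ fun x => ?_
  congr 1
  refine filter_congr fun π _ => ?_
  exact Subtype.val_injective.comp_left.eq_iff (a := Equiv.subtypePiEquivPi x ∘ π)
    (b := Equiv.subtypePiEquivPi x)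

lemma trace_symProj_mul_tpow_diagonal_indicator (S : Finset (Fin q)) :
    trace (symProj q t * tpow t (diagonal fun a => if a ∈ S then 1 else 0))
      = ((#S + t - 1).choose t : ℂ) := by
  have hterm (x : Fin t → Fin q) :
      ∑ π : Equiv.Perm (Fin t), tpow t (diagonal fun a => if a ∈ S then 1 else 0) (x ∘ π) x
        = if ∀ i, x i ∈ S then (#{π : Equiv.Perm (Fin t) | x ∘ π = x} : ℂ) else 0 := by
    simp only [tpow_diagonal_apply, Function.comp_apply, Fintype.prod_boole, sum_ite,
      sum_const_zero, add_zero]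
    split_ifs with hS
    · simp [hS]
    · refine sum_eq_zero fun π hπ => if_neg fun h => hS fun i => ?_
      have hxi : x (π i) = x i := congrFun (mem_filter.mp hπ).2 i
      exact hxi ▸ h i
  simp only [trace, Matrix.diag, symProj_mul_apply, ← mul_sum, hterm]
  rw [← sum_filter, ← Nat.cast_sum, sum_card_perm_fixing_of_forall_mem]
  push_cast
  field_simp [Nat.factorial_ne_zero]

lemma trace_symProj_mul_tpow_conj (A U V : Matrix (Fin q) (Fin q) ℂ) (hVU : V * U = 1) :
    trace (symProj q t * tpow t (U * A * V)) = trace (symProj q t * tpow t A) := by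
  rw [tpow_mul, tpow_mul, ← Matrix.mul_assoc, ← Matrix.mul_assoc, symProj_mul_tpow_comm,
    Matrix.mul_assoc, Matrix.mul_assoc, trace_mul_comm, Matrix.mul_assoc, Matrix.mul_assoc,
    ← tpow_mul, hVU, tpow_one, Matrix.mul_one]

lemma tpow_mul_symProj_mul_tpow_of_mul_self {P : Matrix (Fin q) (Fin q) ℂ} (hP2 : P * P = P) :
    tpow t P * symProj q t * tpow t P = symProj q t * tpow t P := by
  rw [← symProj_mul_tpow_comm, Matrix.mul_assoc, ← tpow_mul, hP2]

lemma trace_symProj_mul_tpow_of_isProj {P : Matrix (Fin q) (Fin q) ℂ} {d : ℕ}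
    (hP1 : Pᴴ = P) (hP2 : P * P = P) (hPtr : P.trace = d) :
    trace (symProj q t * tpow t P) = ((d + t - 1).choose t : ℂ) := by
  have hH : P.IsHermitian := hP1
  set U : Matrix (Fin q) (Fin q) ℂ := (hH.eigenvectorUnitary : Matrix (Fin q) (Fin q) ℂ)
  set f : Fin q → ℂ := RCLike.ofReal ∘ hH.eigenvalues
  have hUU : star U * U = 1 := Unitary.coe_star_mul_self _
  have hUU' : U * star U = 1 := Unitary.coe_mul_star_self _
  have hD : star U * P * U = diagonal f := by
    rw [← Unitary.conjStarAlgAut_star_apply (S := ℂ)]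
    exact hH.conjStarAlgAut_star_eigenvectorUnitary
  have hf (a : Fin q) : f a = 0 ∨ f a = 1 := by
    have hDD : diagonal f * diagonal f = diagonal f := by
      rw [← hD, show star U * P * U * (star U * P * U) = star U * (P * (U * star U) * P) * U by
        simp only [Matrix.mul_assoc], hUU', Matrix.mul_one, hP2]
    have hfa := congrFun (congrFun hDD a) a
    rw [diagonal_mul_diagonal, diagonal_apply_eq, diagonal_apply_eq] at hfa
    exact IsIdempotentElem.iff_eq_zero_or_one.mp hfa
  set S : Finset (Fin q) := {a | f a = 1}
  have hfS : f = fun a => if a ∈ S then 1 else 0 :=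
    funext fun a => by rcases hf a with h | h <;> simp [S, h]
  have hP : P = U * diagonal f * star U := by
    rw [← hD, show U * (star U * P * U) * star U = (U * star U) * P * (U * star U) by
      simp only [Matrix.mul_assoc], hUU', Matrix.one_mul, Matrix.mul_one]
  have hS : #S = d := by
    have : trace (diagonal f) = d := by
      rw [← hD, trace_mul_cycle, hUU', Matrix.one_mul, hPtr]
    rw [hfS, trace_diagonal, sum_boole, filter_mem_eq_inter, univ_inter] at this
    exact_mod_cast this
  rw [hP, trace_symProj_mul_tpow_conj _ _ _ _ hUU, hfS, trace_symProj_mul_tpow_diagonal_indicator,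
    hS]

end SymmetrizedTrace

section ProjectedStates

variable {q : ℕ} (t : ℕ)

lemma vecMulVec_mulVec_star (A : Matrix (Fin q) (Fin q) ℂ) (u : Fin q → ℂ) :
    vecMulVec (A *ᵥ u) (star (A *ᵥ u)) = A * vecMulVec u (star u) * Aᴴ := by
  rw [mul_vecMulVec, vecMulVec_mul, star_mulVec]

lemma pnorm_eq_norm (P : Matrix (Fin q) (Fin q) ℂ) (v : Fin q → ℂ) :
    pnorm P v = ‖WithLp.toLp 2 (P *ᵥ v)‖ := by
  rw [EuclideanSpace.norm_eq]
  rfl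

lemma mulVec_eq_pnorm_smul_ptil (P : Matrix (Fin q) (Fin q) ℂ) (v : Fin q → ℂ) :
    P *ᵥ v = (pnorm P v : ℂ) • ptil P v := by
  by_cases h : pnorm P v = 0
  · rw [pnorm_eq_norm, norm_eq_zero, WithLp.toLp_eq_zero] at h
    ext i
    simp [ptil, h]
  · ext i
    simp [ptil, mul_div_cancel₀ _ (Complex.ofReal_ne_zero.mpr h)]

lemma ofReal_pnorm_sq (P : Matrix (Fin q) (Fin q) ℂ) (v : Fin q → ℂ) :
    ((pnorm P v ^ 2 : ℝ) : ℂ) = trace (vecMulVec (P *ᵥ v) (star (P *ᵥ v))) := by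
  rw [pnorm_eq_norm, EuclideanSpace.norm_sq_eq]
  simp [trace, vecMulVec_apply, RCLike.mul_conj]

lemma ofReal_pnorm_pow (P : Matrix (Fin q) (Fin q) ℂ) (v : Fin q → ℂ) :
    ((pnorm P v ^ (2 * t) : ℝ) : ℂ) = trace (tpow t (vecMulVec (P *ᵥ v) (star (P *ᵥ v)))) := by
  rw [trace_tpow, ← ofReal_pnorm_sq, pow_mul, Complex.ofReal_pow]

lemma tpow_vecMulVec_mulVec_eq_pnorm_smul (P : Matrix (Fin q) (Fin q) ℂ) (v : Fin q → ℂ) :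
    tpow t (vecMulVec (P *ᵥ v) (star (P *ᵥ v)))
      = ((pnorm P v ^ (2 * t) : ℝ) : ℂ) • tpow t (vecMulVec (ptil P v) (star (ptil P v))) := by
  rw [mulVec_eq_pnorm_smul_ptil, star_smul, smul_vecMulVec, vecMulVec_smul, smul_smul, tpow_smul,
    pow_mul]
  simp [sq]

lemma sum_tpow_vecMulVec_mulVec {N : ℕ} (ψ : Fin N → Fin q → ℂ) (P : Matrix (Fin q) (Fin q) ℂ)
    (hP1 : Pᴴ = P) :
    ∑ j, tpow t (vecMulVec (P *ᵥ ψ j) (star (P *ᵥ ψ j)))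
      = tpow t P * (∑ j, tpow t (vecMulVec (ψ j) (star (ψ j)))) * tpow t P := by
  simp only [vecMulVec_mulVec_star, hP1, tpow_mul, Matrix.mul_sum, Matrix.sum_mul]

lemma sum_tpow_vecMulVec_of_design {N : ℕ} (hN : N ≠ 0) (ψ : Fin N → Fin q → ℂ)
    (hdesign : ∀ x y : Fin t → Fin q,
      (N : ℂ)⁻¹ * ∑ j, ∏ i, ψ j (x i) * (starRingEnd ℂ) (ψ j (y i))
        = symProj q t x y / (Nat.choose (q + t - 1) t : ℂ)) :
    ∑ j, tpow t (vecMulVec (ψ j) (star (ψ j)))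
      = ((N : ℂ) / (Nat.choose (q + t - 1) t : ℂ)) • symProj q t := by
  ext x y
  have hN' : (N : ℂ) ≠ 0 := Nat.cast_ne_zero.mpr hN
  rw [Matrix.sum_apply, Matrix.smul_apply, smul_eq_mul, div_mul_eq_mul_div, mul_div_assoc,
    ← hdesign, mul_inv_cancel_left₀ hN']
  simp [tpow_vecMulVec_apply]

end ProjectedStates

theorem stmt_2_general (q d t N : ℕ) (ht : 0 < t) (hN : 0 < N)
    (ψ : Fin N → (Fin q → ℂ))
    (hdesign : ∀ x y : Fin t → Fin q,
      (N : ℂ)⁻¹ * ∑ j, ∏ i, ψ j (x i) * (starRingEnd ℂ) (ψ j (y i))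
        = symProj q t x y / (Nat.choose (q + t - 1) t : ℂ))
    (P : Matrix (Fin q) (Fin q) ℂ)
    (hP1 : Pᴴ = P) (hP2 : P * P = P) (hPtr : P.trace = (d : ℂ)) :
    ∀ x y : Fin t → Fin q,
      ∑ j, ((pnorm P (ψ j) ^ (2 * t) / ∑ k, pnorm P (ψ k) ^ (2 * t) : ℝ) : ℂ) *
          ∏ i, ptil P (ψ j) (x i) * (starRingEnd ℂ) (ptil P (ψ j) (y i))
        = (tpow t P * symProj q t * tpow t P) x y / (Nat.choose (d + t - 1) t : ℂ) := by
  intro x y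
  have hG := tpow_mul_symProj_mul_tpow_of_mul_self t hP2
  set c : ℂ := (N : ℂ) / (Nat.choose (q + t - 1) t : ℂ)
  have hq : 0 < q := (x ⟨0, ht⟩).pos
  have hc : c ≠ 0 := div_ne_zero (Nat.cast_ne_zero.mpr hN.ne')
    (Nat.cast_ne_zero.mpr (Nat.choose_pos (by omega)).ne')
  have hsum : ∑ j, tpow t (vecMulVec (P *ᵥ ψ j) (star (P *ᵥ ψ j)))
      = c • (symProj q t * tpow t P) := by
    rw [sum_tpow_vecMulVec_mulVec t ψ P hP1, sum_tpow_vecMulVec_of_design t hN.ne' ψ hdesign,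
      Matrix.mul_smul, Matrix.smul_mul, hG]
  have hnorm : ((∑ k, pnorm P (ψ k) ^ (2 * t) : ℝ) : ℂ) = c * (Nat.choose (d + t - 1) t : ℂ) := by
    rw [Complex.ofReal_sum]
    simp_rw [ofReal_pnorm_pow]
    rw [← trace_sum, hsum, trace_smul, trace_symProj_mul_tpow_of_isProj t hP1 hP2 hPtr,
      smul_eq_mul]
  calc _ = ((∑ k, pnorm P (ψ k) ^ (2 * t) : ℝ) : ℂ)⁻¹ *
        (∑ j, tpow t (vecMulVec (P *ᵥ ψ j) (star (P *ᵥ ψ j)))) x y := by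
        simp only [Matrix.sum_apply, mul_sum, tpow_vecMulVec_mulVec_eq_pnorm_smul,
          Matrix.smul_apply, tpow_vecMulVec_apply, Complex.ofReal_div, Pi.star_apply,
          starRingEnd_apply, smul_eq_mul]
        exact sum_congr rfl fun j _ => by ring
    _ = _ := by
        rw [hsum, hnorm, hG, Matrix.smul_apply, smul_eq_mul, _root_.mul_inv_rev, mul_assoc,
          inv_mul_cancel_left₀ hc, inv_mul_eq_div]

/-- Projecting a uniform state `t`-design in dimension `q` onto a `d`-dimensional
subspace (`P` an orthogonal projector of rank `d`, `d ≤ q`) and reweighting by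
`w̃_j = ‖Pψ_j‖^{2t} / ∑_k ‖Pψ_k‖^{2t}` yields a weighted state `t`-design for the
subspace: the weighted average of `(|ψ̃_j⟩⟨ψ̃_j|)^{⊗t}` equals the normalized
projector onto the symmetric subspace of `V^{⊗t}` (entrywise). -/
theorem stmt_2 (q d t N : ℕ) (hd : 0 < d) (hdq : d ≤ q) (ht : 0 < t) (hN : 0 < N)
    (ψ : Fin N → (Fin q → ℂ))
    (hunit : ∀ j, ∑ i, ‖ψ j i‖ ^ 2 = 1)
    (hdesign : ∀ x y : Fin t → Fin q,
      (N : ℂ)⁻¹ * ∑ j, ∏ i, ψ j (x i) * (starRingEnd ℂ) (ψ j (y i))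
        = symProj q t x y / (Nat.choose (q + t - 1) t : ℂ))
    (P : Matrix (Fin q) (Fin q) ℂ)
    (hP1 : Pᴴ = P) (hP2 : P * P = P) (hPtr : P.trace = (d : ℂ)) :
    ∀ x y : Fin t → Fin q,
      ∑ j, ((pnorm P (ψ j) ^ (2 * t) / ∑ k, pnorm P (ψ k) ^ (2 * t) : ℝ) : ℂ) *
          ∏ i, ptil P (ψ j) (x i) * (starRingEnd ℂ) (ptil P (ψ j) (y i))
        = (tpow t P * symProj q t * tpow t P) x y / (Nat.choose (d + t - 1) t : ℂ) :=
  stmt_2_general q d t N ht hN ψ hdesign P hP1 hP2 hPtr
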